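/- arXiv:1211.1343 — 4 statements merged into one kernel-verified Lean document; each statement's English description precedes it below -/
import Mathlib

section
/- Let q ∈ (0,1) and c' ≥ 0, and let (Δ_n)_{n≥0} be a sequence of nonnegative real numbers satisfying Δ_n ≤ q·Δ_{n−1} + c'·q^{n/2}·Δ_{n−1}^{1/2} for all n ≥ 1. Then for every η with 0 < η < 1 − q^{1/2} there exists a constant C₂ such that Δ_n ≤ C₂·(q^{1/2} + η)ⁿ for all n ≥ 0. -/
/-!
With `r = √q + η` we show `Δ n ≤ C * r ^ n` by induction. Since `√q ^ 2 = q ≤ r`, the cross term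
`c' * √q ^ (n + 1) * √(C * r ^ n)` is at most `c' * √q * √C * r ^ n`, so the induction closes as soon as
`q * C + c' * √q * √C ≤ r * C`; because `q < r`, this holds for every sufficiently large `C`.
-/

open Real

theorem exists_ge_mul_add_mul_sqrt_le {q r : ℝ} (hqr : q < r) (a D : ℝ) :
    ∃ C ≥ D, q * C + a * √C ≤ r * C := by
  refine ⟨max D ((a / (r - q)) ^ 2), le_max_left _ _, ?_⟩
  set C := max D ((a / (r - q)) ^ 2)
  have hrq : 0 < r - q := sub_pos.2 hqr
  have hC : 0 ≤ C := (sq_nonneg _).trans (le_max_right _ _)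
  have ha : a ≤ (r - q) * √C := by
    rw [← div_le_iff₀' hrq]
    exact (le_abs_self _).trans (abs_le_sqrt (le_max_right _ _))
  calc q * C + a * √C ≤ q * C + (r - q) * √C * √C := by gcongr
    _ = r * C := by rw [mul_assoc, mul_self_sqrt hC]; ring

theorem le_mul_pow_of_le_mul_add_mul_pow_mul_sqrt {q b ρ r C : ℝ} {Δ : ℕ → ℝ} (hq : 0 ≤ q)
    (hb : 0 ≤ b) (hρ : 0 ≤ ρ) (hρr : ρ ^ 2 ≤ r) (hC : q * C + b * ρ * √C ≤ r * C)
    (h0 : Δ 0 ≤ C) (hrec : ∀ n, Δ (n + 1) ≤ q * Δ n + b * ρ ^ (n + 1) * √(Δ n)) (n : ℕ) :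
    Δ n ≤ C * r ^ n := by
  have hr : 0 ≤ r := (sq_nonneg ρ).trans hρr
  induction n with
  | zero => simpa using h0
  | succ n ih =>
    have hρn : ρ ^ n * √(r ^ n) ≤ r ^ n := by
      have : ρ ^ n ≤ √(r ^ n) := by
        rw [le_sqrt (by positivity) (by positivity), ← pow_mul, mul_comm, pow_mul]
        gcongr
      calc ρ ^ n * √(r ^ n) ≤ √(r ^ n) * √(r ^ n) := by gcongr
        _ = r ^ n := mul_self_sqrt (by positivity)
    calc Δ (n + 1) ≤ q * (C * r ^ n) + b * ρ ^ (n + 1) * √(C * r ^ n) := by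
          refine (hrec n).trans ?_
          gcongr
      _ = q * C * r ^ n + b * ρ * √C * (ρ ^ n * √(r ^ n)) := by
          rw [sqrt_mul' _ (by positivity)]; ring
      _ ≤ q * C * r ^ n + b * ρ * √C * r ^ n := by gcongr
      _ = (q * C + b * ρ * √C) * r ^ n := by ring
      _ ≤ r * C * r ^ n := by gcongr
      _ = C * r ^ (n + 1) := by ring

theorem stmt_2_general (q c' : ℝ) (hq0 : 0 < q) (hq1 : q < 1) (hc' : 0 ≤ c')
    (Δ : ℕ → ℝ)
    (hrec : ∀ n : ℕ, 1 ≤ n →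
      Δ n ≤ q * Δ (n - 1) + c' * (Real.sqrt q) ^ n * Real.sqrt (Δ (n - 1))) :
    ∀ η : ℝ, 0 < η → η < 1 - Real.sqrt q →
      ∃ C₂ : ℝ, ∀ n : ℕ, Δ n ≤ C₂ * (Real.sqrt q + η) ^ n := by
  intro η hη _
  have hq_le : q ≤ √q := le_sqrt_self_iff.2 hq1.le
  obtain ⟨C, hC0, hC⟩ :=
    exists_ge_mul_add_mul_sqrt_le (q := q) (r := √q + η) (by linarith) (c' * √q) (Δ 0)
  have hsq_le : √q ^ 2 ≤ √q + η := by rw [sq_sqrt hq0.le]; linarith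
  exact ⟨C, le_mul_pow_of_le_mul_add_mul_pow_mul_sqrt hq0.le hc' (sqrt_nonneg q) hsq_le hC hC0
    fun n => by simpa using hrec (n + 1) (by omega)⟩

/-- geometric decay for the recursion
`Δ_n ≤ q·Δ_{n−1} + c'·q^{n/2}·Δ_{n−1}^{1/2}`. -/
theorem stmt_2 (q c' : ℝ) (hq0 : 0 < q) (hq1 : q < 1) (hc' : 0 ≤ c')
    (Δ : ℕ → ℝ) (hΔ : ∀ n, 0 ≤ Δ n)
    (hrec : ∀ n : ℕ, 1 ≤ n →
      Δ n ≤ q * Δ (n - 1) + c' * (Real.sqrt q) ^ n * Real.sqrt (Δ (n - 1))) :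
    ∀ η : ℝ, 0 < η → η < 1 - Real.sqrt q →
      ∃ C₂ : ℝ, ∀ n : ℕ, Δ n ≤ C₂ * (Real.sqrt q + η) ^ n :=
  stmt_2_general q c' hq0 hq1 hc' Δ hrec
end

section
/- Let (U,V) be a random vector with density 2·1{0 ≤ u ≤ v ≤ 1} on [0,1]² and let ξ be uniform on [0,1] and independent of (U,V). Set W₀ = K₀(ξ;U,V), W₁ = K₁(ξ;U,V) and D = V − U. Then: (a) under the probability measure conditioned on the event {ξ < U or ξ ≥ V}, the random variable W₀ is uniformly distributed on [0,1] and is independent of D; (b) under the probability measure conditioned on the event {U ≤ ξ < V}, the random variables W₀, W₁ and D are mutually independent, and W₀ and W₁ are each uniformly distributed on [0,1]. -/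
/-!
Let `ν = unifLaw ⊗ uvLaw` be the joint law of `(ξ, (U, V))`. Fix `(u, v)` with `0 ≤ u ≤ v ≤ 1`
and put `d = v - u`. Off the gap `[u, v)`, `K₀(·; u, v)` closes the gap up and rescales by
`1 - d`, so it sends Lebesgue measure on `[0,1] \ [u,v)` to `(1 - d) • unifLaw`; on the gap,
`K₁(·; u, v)` rescales `[u, v)` onto `[0, 1)` and sends Lebesgue measure to `d • unifLaw`. Since
the `ξ`-sections factor as a weight in `(u, v)` times `unifLaw`, integrating over `(u, v)` gives
(a) and splits off the `K₁`-factor in (b). On the gap `K₀ = U / (1 - D)`, and the last factor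
comes from the fact that under `uvLaw`, `U / (1 - D)` is uniform and independent of `D`: after the
shear `v = u + d`, for fixed `d` the variable `u` is uniform on `[0, 1 - d]`.
-/

open MeasureTheory ProbabilityTheory Set
open scoped ENNReal

noncomputable section

/-- `K₀(s;u,v)` from the recursive triangulation of the disk. -/
def K0 (s u v : ℝ) : ℝ :=
  if s < u then s / (1 - (v - u))
  else if s < v then u / (1 - (v - u))
  else (s - (v - u)) / (1 - (v - u))

/-- `K₁(s;u,v)` from the recursive triangulation of the disk. -/
def K1 (s u v : ℝ) : ℝ :=
  if u ≤ s ∧ s < v then (s - u) / (v - u) else 0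

/-- The law on `[0,1]²` with density `2·1{0 ≤ u ≤ v ≤ 1}` w.r.t. Lebesgue measure. -/
def uvLaw : Measure (ℝ × ℝ) :=
  volume.withDensity fun p =>
    ENNReal.ofReal (if 0 ≤ p.1 ∧ p.1 ≤ p.2 ∧ p.2 ≤ 1 then 2 else 0)

/-- The uniform law on `[0,1]`. -/
def unifLaw : Measure ℝ := volume.restrict (Set.Icc 0 1)

section ProdSections

variable {α β : Type*} [MeasurableSpace α] [MeasurableSpace β] {μ : Measure α} {ν : Measure β}
  [SFinite μ] [SFinite ν]

lemma MeasureTheory.Measure.prod_inter_snd_preimage {E : Set (α × β)} {G : Set β}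
    (hE : MeasurableSet E) (hG : MeasurableSet G) :
    μ.prod ν (E ∩ Prod.snd ⁻¹' G) = ∫⁻ y in G, μ ((·, y) ⁻¹' E) ∂ν := by
  rw [Measure.prod_apply_symm (hE.inter (measurable_snd hG)), ← lintegral_indicator hG]
  congr 1 with y
  by_cases hy : y ∈ G <;> simp [hy, preimage_preimage]

lemma MeasureTheory.Measure.prod_inter_snd_preimage_eq_mul {E F : Set (α × β)} {G : Set β}
    (hE : MeasurableSet E) (hF : MeasurableSet F) (hG : MeasurableSet G) {c : ℝ≥0∞}
    (h : ∀ᵐ y ∂ν, μ ((·, y) ⁻¹' E) = c * μ ((·, y) ⁻¹' F)) :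
    μ.prod ν (E ∩ Prod.snd ⁻¹' G) = c * μ.prod ν (F ∩ Prod.snd ⁻¹' G) := by
  rw [Measure.prod_inter_snd_preimage hE hG, Measure.prod_inter_snd_preimage hF hG,
    ← lintegral_const_mul _ (measurable_measure_prodMk_right hF)]
  exact setLIntegral_congr_fun_ae hG (h.mono fun y hy _ => hy)

lemma MeasureTheory.setLIntegral_prod_snd {f : β → ℝ≥0∞} (hf : Measurable f) (s : Set α)
    (t : Set β) : ∫⁻ p in s ×ˢ t, f p.2 ∂μ.prod ν = μ s * ∫⁻ y in t, f y ∂ν := by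
  rw [← Measure.prod_restrict]
  simpa using lintegral_prod_mul (μ := μ.restrict s) (ν := ν.restrict t)
    (f := fun _ => (1 : ℝ≥0∞)) aemeasurable_const hf.aemeasurable

end ProdSections

section Transfer

variable {Ω α β γ : Type*} [MeasurableSpace Ω] [MeasurableSpace α] [MeasurableSpace β]
  [MeasurableSpace γ] {μ : Measure Ω} {T : Ω → α}

lemma map_cond_preimage (hT : Measurable T) {A : Set α} (hA : MeasurableSet A) :
    (μ[|T ⁻¹' A]).map T = (μ.map T)[|A] := by
  ext Z hZ
  rw [Measure.map_apply hT hZ, cond_apply (hT hA), cond_apply hA, Measure.map_apply hT hA,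
    Measure.map_apply hT (hA.inter hZ), preimage_inter]

lemma ProbabilityTheory.IndepFun.comp_right {f : α → β} {g : α → γ} (hT : Measurable T)
    (hf : Measurable f) (hg : Measurable g) (h : IndepFun f g (μ.map T)) :
    IndepFun (f ∘ T) (g ∘ T) μ := by
  rw [indepFun_iff_measure_inter_preimage_eq_mul] at h ⊢
  intro s t hs ht
  have := h s t hs ht
  rwa [Measure.map_apply hT ((hf hs).inter (hg ht)), Measure.map_apply hT (hf hs),
    Measure.map_apply hT (hg ht)] at this

lemma ProbabilityTheory.iIndepFun.comp_right {ι : Type*} {f : ι → α → β} (hT : Measurable T)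
    (hf : ∀ i, Measurable (f i)) (h : iIndepFun f (μ.map T)) :
    iIndepFun (fun i => f i ∘ T) μ := by
  rw [iIndepFun_iff_measure_inter_preimage_eq_mul] at h ⊢
  intro S sets hsets
  have := h S hsets
  rwa [Measure.map_apply hT (Finset.measurableSet_biInter S fun i hi => hf i (hsets i hi)),
    preimage_iInter₂, Finset.prod_congr rfl fun i hi => Measure.map_apply hT (hf i (hsets i hi))]
    at this

variable {P : Measure Ω} [IsProbabilityMeasure P]

lemma map_eq_and_indepFun_of_measure_inter_preimage_eq_mul {f : Ω → β} {g : Ω → γ}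
    (hf : Measurable f) {ρ : Measure β}
    (h : ∀ s t, MeasurableSet s → MeasurableSet t →
      P (f ⁻¹' s ∩ g ⁻¹' t) = ρ s * P (g ⁻¹' t)) :
    P.map f = ρ ∧ IndepFun f g P := by
  have hmarg : ∀ s, MeasurableSet s → P (f ⁻¹' s) = ρ s := fun s hs => by
    simpa using h s univ hs MeasurableSet.univ
  refine ⟨Measure.ext fun s hs => by rw [Measure.map_apply hf hs, hmarg s hs], ?_⟩
  rw [indepFun_iff_measure_inter_preimage_eq_mul]
  intro s t hs ht
  rw [h s t hs ht, hmarg s hs]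

lemma map_eq_and_iIndepFun_of_measure_inter_preimage_eq_mul {f g k : Ω → β}
    (hf : Measurable f) (hg : Measurable g) (hk : Measurable k) {ρ ρ' : Measure β}
    [IsProbabilityMeasure ρ] [IsProbabilityMeasure ρ']
    (h : ∀ s t r, MeasurableSet s → MeasurableSet t → MeasurableSet r →
      P (f ⁻¹' s ∩ g ⁻¹' t ∩ k ⁻¹' r) = ρ s * ρ' t * P (k ⁻¹' r)) :
    P.map f = ρ ∧ P.map g = ρ' ∧ iIndepFun ![f, g, k] P := by
  have hf' : ∀ s, MeasurableSet s → P (f ⁻¹' s) = ρ s := fun s hs => by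
    simpa using h s univ univ hs MeasurableSet.univ MeasurableSet.univ
  have hg' : ∀ t, MeasurableSet t → P (g ⁻¹' t) = ρ' t := fun t ht => by
    simpa using h univ t univ MeasurableSet.univ ht MeasurableSet.univ
  have hmeas : ∀ i, Measurable (![f, g, k] i) := fun i => by fin_cases i <;> assumption
  refine ⟨Measure.ext fun s hs => by rw [Measure.map_apply hf hs, hf' s hs],
    Measure.ext fun t ht => by rw [Measure.map_apply hg ht, hg' t ht], ?_⟩
  rw [iIndepFun_iff_map_fun_eq_pi_map fun i => (hmeas i).aemeasurable]
  refine (Measure.pi_eq fun s hs => ?_).symm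
  have hpre : (fun ω i => ![f, g, k] i ω) ⁻¹' univ.pi s
      = f ⁻¹' s 0 ∩ g ⁻¹' s 1 ∩ k ⁻¹' s 2 := by
    ext ω; simp [Fin.forall_fin_succ, and_assoc]
  rw [Measure.map_apply (measurable_pi_lambda _ hmeas) (MeasurableSet.univ_pi hs), hpre,
    h _ _ _ (hs 0) (hs 1) (hs 2), Fin.prod_univ_three]
  change _ = P.map f (s 0) * P.map g (s 1) * P.map k (s 2)
  rw [Measure.map_apply hf (hs 0), Measure.map_apply hg (hs 1), Measure.map_apply hk (hs 2),
    hf' _ (hs 0), hg' _ (hs 1)]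

end Transfer

instance : IsProbabilityMeasure unifLaw := ⟨by simp [unifLaw]⟩

lemma unifLaw_apply (s : Set ℝ) : unifLaw s = volume (s ∩ Icc 0 1) :=
  Measure.restrict_apply' measurableSet_Icc

lemma unifLaw_Icc {a b : ℝ} (ha : 0 ≤ a) (hb : b ≤ 1) : unifLaw (Icc a b) = .ofReal (b - a) := by
  rw [unifLaw_apply, inter_eq_left.2 (Icc_subset_Icc ha hb), Real.volume_Icc]

lemma volume_Icc_inter_preimage_div (a : ℝ) (s : Set ℝ) :
    volume (Icc 0 a ∩ (· / a) ⁻¹' s) = .ofReal a * unifLaw s := by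
  rcases le_or_gt a 0 with ha | ha
  · rw [ENNReal.ofReal_of_nonpos ha, zero_mul]
    exact measure_mono_null (inter_subset_left.trans (Icc_subset_Icc_right ha))
      (by simp)
  have hdiv : (· / a) = (a⁻¹ * ·) := funext fun x => div_eq_inv_mul x a
  have hset : Icc 0 a ∩ (· / a) ⁻¹' s = (· / a) ⁻¹' (s ∩ Icc 0 1) := by
    ext x; simp [le_div_iff₀ ha, div_le_one ha, and_comm]
  rw [hset, unifLaw_apply, hdiv, Real.volume_preimage_mul_left (inv_ne_zero ha.ne'), inv_inv,
    abs_of_pos ha]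

lemma K0_of_lt {x u v : ℝ} (hx : x < u) : K0 x u v = x / (1 - (v - u)) := if_pos hx

lemma K0_of_mem_Ico {x u v : ℝ} (hux : u ≤ x) (hxv : x < v) :
    K0 x u v = u / (1 - (v - u)) := by
  rw [K0, if_neg hux.not_gt, if_pos hxv]

lemma K0_of_le {x u v : ℝ} (huv : u ≤ v) (hx : v ≤ x) :
    K0 x u v = (x - (v - u)) / (1 - (v - u)) := by
  rw [K0, if_neg (by linarith), if_neg hx.not_gt]

lemma K1_of_mem_Ico {x u v : ℝ} (hux : u ≤ x) (hxv : x < v) : K1 x u v = (x - u) / (v - u) :=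
  if_pos ⟨hux, hxv⟩

lemma unifLaw_K0_mem_outside {u v : ℝ} (hu : 0 ≤ u) (huv : u ≤ v) (hv : v ≤ 1) {s : Set ℝ}
    (hs : MeasurableSet s) :
    unifLaw {x | (x < u ∨ v ≤ x) ∧ K0 x u v ∈ s} = .ofReal (1 - (v - u)) * unifLaw s := by
  set a := 1 - (v - u)
  set Y := (· / a) ⁻¹' s
  -- `[0, u)` is kept and `[v, 1]` is shifted onto `[u, a]`
  have hset : {x | (x < u ∨ v ≤ x) ∧ K0 x u v ∈ s} ∩ Icc 0 1
      = Ico 0 u ∩ Y ∪ (· + -(v - u)) ⁻¹' (Icc u a ∩ Y) := by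
    ext x
    simp only [mem_inter_iff, mem_ofPred_eq, mem_union, mem_preimage, mem_Ico, mem_Icc, Y,
      ← sub_eq_add_neg]
    constructor
    · rintro ⟨⟨hx | hx, hK⟩, hx0, hx1⟩
      · exact Or.inl ⟨⟨hx0, hx⟩, by rwa [K0_of_lt hx] at hK⟩
      · exact Or.inr ⟨⟨by linarith, by linarith⟩, by rwa [K0_of_le huv hx] at hK⟩
    · rintro (⟨⟨hx0, hx⟩, hK⟩ | ⟨⟨h1, h2⟩, hK⟩)
      · exact ⟨⟨Or.inl hx, by rwa [K0_of_lt hx]⟩, hx0, by linarith⟩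
      · have hx : v ≤ x := by linarith
        exact ⟨⟨Or.inr hx, by rwa [K0_of_le huv hx]⟩, by linarith, by linarith⟩
  have hY : MeasurableSet Y := measurable_id.div_const a hs
  rw [unifLaw_apply, hset, measure_union, measure_preimage_add_right, ← measure_union,
    ← union_inter_distrib_right, Ico_union_Icc_eq_Icc hu (by linarith),
    volume_Icc_inter_preimage_div]
  · exact disjoint_left.2 fun x hx hx' => hx.1.2.not_ge hx'.1.1
  · exact measurableSet_Icc.inter hY
  · refine disjoint_left.2 fun x hx hx' => ?_
    have h1 : x < u := hx.1.2
    have h2 : u ≤ x + -(v - u) := hx'.1.1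
    linarith
  · exact (measurableSet_Icc.inter hY).preimage (measurable_add_const _)

lemma unifLaw_K1_mem_inside {u v : ℝ} (hu : 0 ≤ u) (hv : v ≤ 1) (t : Set ℝ) :
    unifLaw {x | (u ≤ x ∧ x < v) ∧ K1 x u v ∈ t} = .ofReal (v - u) * unifLaw t := by
  have hset : {x | (u ≤ x ∧ x < v) ∧ K1 x u v ∈ t} ∩ Icc 0 1
      = (· + -u) ⁻¹' (Ico 0 (v - u) ∩ (· / (v - u)) ⁻¹' t) := by
    ext x
    simp only [mem_inter_iff, mem_ofPred_eq, mem_preimage, mem_Ico, mem_Icc, ← sub_eq_add_neg,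
      sub_nonneg, sub_lt_sub_iff_right]
    constructor
    · rintro ⟨⟨⟨h1, h2⟩, hK⟩, -⟩
      exact ⟨⟨h1, h2⟩, by rwa [K1_of_mem_Ico h1 h2] at hK⟩
    · rintro ⟨⟨h1, h2⟩, hK⟩
      exact ⟨⟨⟨h1, h2⟩, by rwa [K1_of_mem_Ico h1 h2]⟩, by linarith, by linarith⟩
  rw [unifLaw_apply, hset, measure_preimage_add_right,
    measure_congr ((Ico_ae_eq_Icc (μ := (volume : Measure ℝ)) (a := 0) (b := v - u)).inter
      (ae_eq_refl ((· / (v - u)) ⁻¹' t))), volume_Icc_inter_preimage_div]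

def triangle : Set (ℝ × ℝ) := {q | 0 ≤ q.1 ∧ q.1 ≤ q.2 ∧ q.2 ≤ 1}

lemma measurableSet_triangle : MeasurableSet triangle :=
  (measurableSet_le measurable_const measurable_fst).inter
    ((measurableSet_le measurable_fst measurable_snd).inter
      (measurableSet_le measurable_snd measurable_const))

lemma uvLaw_eq_smul_restrict : uvLaw = (2 : ℝ≥0∞) • volume.restrict triangle := by
  have hdens : (fun p : ℝ × ℝ =>
      ENNReal.ofReal (if 0 ≤ p.1 ∧ p.1 ≤ p.2 ∧ p.2 ≤ 1 then 2 else 0))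
        = triangle.indicator fun _ => 2 := by
    ext p; simp only [indicator, triangle, mem_ofPred_eq]; split_ifs with h <;> simp [h]
  rw [uvLaw, hdens, withDensity_indicator measurableSet_triangle, withDensity_const]

lemma uvLaw_apply {X : Set (ℝ × ℝ)} (hX : MeasurableSet X) :
    uvLaw X = 2 * volume (X ∩ triangle) := by
  rw [uvLaw_eq_smul_restrict, Measure.smul_apply, Measure.restrict_apply hX, smul_eq_mul]

instance : IsFiniteMeasure uvLaw := by
  have htri : volume triangle < ⊤ := (measure_mono (show triangle ⊆ Icc (0, 0) (1, 1) from
    fun q ⟨h0, h1, h2⟩ => ⟨⟨h0, h0.trans h1⟩, ⟨h1.trans h2, h2⟩⟩)).trans_lt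
      isCompact_Icc.measure_lt_top
  exact ⟨by rw [uvLaw_apply .univ, univ_inter]; exact ENNReal.mul_lt_top (by simp) htri⟩

lemma ae_uvLaw : ∀ᵐ q ∂uvLaw, q ∈ triangle := by
  rw [uvLaw_eq_smul_restrict]
  exact (ae_restrict_mem measurableSet_triangle).filter_mono (Measure.ae_smul_measure_le _)

lemma uvLaw_Icc_prod_Icc {a b c d : ℝ} (ha : 0 ≤ a) (hbc : b ≤ c) (hd : d ≤ 1) :
    uvLaw (Icc a b ×ˢ Icc c d) = 2 * (.ofReal (b - a) * .ofReal (d - c)) := by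
  rw [uvLaw_apply (measurableSet_Icc.prod measurableSet_Icc), inter_eq_left.2,
    Measure.volume_eq_prod, Measure.prod_prod, Real.volume_Icc, Real.volume_Icc]
  rintro q ⟨⟨h1, h2⟩, h3, h4⟩
  exact ⟨ha.trans h1, h2.trans (hbc.trans h3), h4.trans hd⟩

def gap (q : ℝ × ℝ) : ℝ := q.2 - q.1

def posGap (q : ℝ × ℝ) : ℝ × ℝ := (q.1 / (1 - gap q), gap q)

@[fun_prop]
lemma measurable_gap : Measurable gap := by unfold gap; fun_prop

@[fun_prop]
lemma measurable_posGap : Measurable posGap := by unfold posGap; fun_prop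

lemma posGap_preimage_univ_prod (r : Set ℝ) : posGap ⁻¹' (univ ×ˢ r) = gap ⁻¹' r := by
  ext; simp [posGap]

lemma uvLaw_apply_eq_volume_shear {X : Set (ℝ × ℝ)} (hX : MeasurableSet X) :
    uvLaw X = 2 * volume ((fun z : ℝ × ℝ => (z.1, z.1 + z.2)) ⁻¹' (X ∩ triangle)) := by
  rw [uvLaw_apply hX, Measure.volume_eq_prod,
    (measurePreserving_prod_add volume volume).measure_preimage
      (hX.inter measurableSet_triangle).nullMeasurableSet]

lemma map_posGap_uvLaw : uvLaw.map posGap = unifLaw.prod (uvLaw.map gap) := by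
  set E : Set ℝ → Set (ℝ × ℝ) := fun s =>
    {z | z.1 / (1 - z.2) ∈ s ∧ 0 ≤ z.1 ∧ 0 ≤ z.2 ∧ z.1 + z.2 ≤ 1}
  have hshear : ∀ s r, (fun z : ℝ × ℝ => (z.1, z.1 + z.2)) ⁻¹' (posGap ⁻¹' (s ×ˢ r) ∩ triangle)
      = E s ∩ Prod.snd ⁻¹' r := by
    intro s r; ext z; simp [E, posGap, gap, triangle]; tauto
  have hE : ∀ s, MeasurableSet s → MeasurableSet (E s) := fun s hs =>
    ((measurable_fst.div (measurable_const.sub measurable_snd)) hs).inter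
      ((measurableSet_le measurable_const measurable_fst).inter
        ((measurableSet_le measurable_const measurable_snd).inter
          (measurableSet_le (measurable_fst.add measurable_snd) measurable_const)))
  have hsection : ∀ s, ∀ d, 0 ≤ d → (·, d) ⁻¹' E s = Icc 0 (1 - d) ∩ (· / (1 - d)) ⁻¹' s := by
    intro s d hd; ext u; simp [E, hd, le_sub_iff_add_le]; tauto
  refine (Measure.prod_eq fun s r hs hr => ?_).symm
  rw [Measure.map_apply measurable_posGap (hs.prod hr), Measure.map_apply measurable_gap hr,
    ← posGap_preimage_univ_prod, uvLaw_apply_eq_volume_shear (measurable_posGap (hs.prod hr)),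
    uvLaw_apply_eq_volume_shear (measurable_posGap (MeasurableSet.univ.prod hr)), hshear,
    hshear, Measure.volume_eq_prod,
    Measure.prod_inter_snd_preimage_eq_mul (hE s hs) (hE univ .univ) hr, mul_left_comm]
  refine .of_forall fun d => ?_
  rcases lt_or_ge d 0 with hd | hd
  · have hempty : ∀ s, (·, d) ⁻¹' E s = ∅ := fun s => by ext u; simp [E, hd.not_ge]
    rw [hempty, hempty, measure_empty, mul_zero]
  · rw [hsection s d hd, hsection univ d hd, volume_Icc_inter_preimage_div,
      volume_Icc_inter_preimage_div, measure_univ, mul_one, mul_comm]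

lemma setLIntegral_posGap_preimage_prod {w : ℝ → ℝ≥0∞} (hw : Measurable w) {s r : Set ℝ}
    (hs : MeasurableSet s) (hr : MeasurableSet r) :
    ∫⁻ q in posGap ⁻¹' (s ×ˢ r), w (gap q) ∂uvLaw
      = unifLaw s * ∫⁻ q in gap ⁻¹' r, w (gap q) ∂uvLaw := by
  have key : ∀ s, MeasurableSet s → ∫⁻ q in posGap ⁻¹' (s ×ˢ r), w (gap q) ∂uvLaw
      = unifLaw s * ∫⁻ d in r, w d ∂uvLaw.map gap := fun s hs => by
    have := setLIntegral_map (μ := uvLaw) (f := fun p : ℝ × ℝ => w p.2) (hs.prod hr)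
      (hw.comp measurable_snd) measurable_posGap
    rw [map_posGap_uvLaw, setLIntegral_prod_snd hw] at this
    exact this.symm
  rw [key s hs, ← posGap_preimage_univ_prod, key univ .univ, measure_univ, one_mul]

lemma unifLaw_Ico {u v : ℝ} (hu : 0 ≤ u) (hv : v ≤ 1) : unifLaw (Ico u v) = .ofReal (v - u) := by
  rw [unifLaw_apply, inter_eq_left.2 (Ico_subset_Icc_self.trans (Icc_subset_Icc hu hv)),
    Real.volume_Ico]

def offGap : Set (ℝ × ℝ × ℝ) := {p | p.1 < p.2.1 ∨ p.2.2 ≤ p.1}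

def inGap : Set (ℝ × ℝ × ℝ) := {p | p.2.1 ≤ p.1 ∧ p.1 < p.2.2}

def W0 (p : ℝ × ℝ × ℝ) : ℝ := K0 p.1 p.2.1 p.2.2

def W1 (p : ℝ × ℝ × ℝ) : ℝ := K1 p.1 p.2.1 p.2.2

lemma measurableSet_offGap : MeasurableSet offGap :=
  (measurableSet_lt measurable_fst measurable_snd.fst).union
    (measurableSet_le measurable_snd.snd measurable_fst)

lemma measurableSet_inGap : MeasurableSet inGap :=
  (measurableSet_le measurable_snd.fst measurable_fst).inter
    (measurableSet_lt measurable_fst measurable_snd.snd)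

lemma measurable_W0 : Measurable W0 :=
  Measurable.ite (measurableSet_lt measurable_fst measurable_snd.fst) (by fun_prop) <|
    Measurable.ite (measurableSet_lt measurable_fst measurable_snd.snd) (by fun_prop) (by fun_prop)

lemma measurable_W1 : Measurable W1 :=
  Measurable.ite measurableSet_inGap (by fun_prop) measurable_const

lemma measurable_gap_snd : Measurable fun p : ℝ × ℝ × ℝ => gap p.2 :=
  measurable_gap.comp measurable_snd

lemma prod_offGap_inter_W0_inter_gap {s t : Set ℝ} (hs : MeasurableSet s)
    (ht : MeasurableSet t) :
    unifLaw.prod uvLaw (offGap ∩ W0 ⁻¹' s ∩ (fun p => gap p.2) ⁻¹' t)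
      = unifLaw s * unifLaw.prod uvLaw (offGap ∩ (fun p => gap p.2) ⁻¹' t) := by
  refine Measure.prod_inter_snd_preimage_eq_mul (measurableSet_offGap.inter (measurable_W0 hs))
    measurableSet_offGap (measurable_gap ht) (ae_uvLaw.mono fun q ⟨hu, huv, hv⟩ => ?_)
  change unifLaw {x | (x < q.1 ∨ q.2 ≤ x) ∧ K0 x q.1 q.2 ∈ s}
    = unifLaw s * unifLaw {x | x < q.1 ∨ q.2 ≤ x}
  have hout := unifLaw_K0_mem_outside hu huv hv MeasurableSet.univ
  simp only [mem_univ, and_true, measure_univ, mul_one] at hout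
  rw [unifLaw_K0_mem_outside hu huv hv hs, hout, mul_comm]

lemma prod_inGap_inter_W1_inter_snd {t : Set ℝ} {G : Set (ℝ × ℝ)} (ht : MeasurableSet t)
    (hG : MeasurableSet G) :
    unifLaw.prod uvLaw (inGap ∩ W1 ⁻¹' t ∩ Prod.snd ⁻¹' G)
      = unifLaw t * unifLaw.prod uvLaw (inGap ∩ Prod.snd ⁻¹' G) := by
  refine Measure.prod_inter_snd_preimage_eq_mul (measurableSet_inGap.inter (measurable_W1 ht))
    measurableSet_inGap hG (ae_uvLaw.mono fun q ⟨hu, _, hv⟩ => ?_)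
  change unifLaw {x | (q.1 ≤ x ∧ x < q.2) ∧ K1 x q.1 q.2 ∈ t}
    = unifLaw t * unifLaw (Ico q.1 q.2)
  rw [unifLaw_K1_mem_inside hu hv, unifLaw_Ico hu hv, mul_comm]

lemma prod_inGap_inter_snd {X : Set (ℝ × ℝ)} (hX : MeasurableSet X) :
    unifLaw.prod uvLaw (inGap ∩ Prod.snd ⁻¹' X) = ∫⁻ q in X, .ofReal (gap q) ∂uvLaw := by
  rw [Measure.prod_inter_snd_preimage measurableSet_inGap hX]
  refine setLIntegral_congr_fun_ae hX (ae_uvLaw.mono fun q ⟨hu, _, hv⟩ _ => ?_)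
  exact unifLaw_Ico hu hv

lemma prod_inGap_inter_posGap {s r : Set ℝ} (hs : MeasurableSet s) (hr : MeasurableSet r) :
    unifLaw.prod uvLaw (inGap ∩ Prod.snd ⁻¹' (posGap ⁻¹' (s ×ˢ r)))
      = unifLaw s * unifLaw.prod uvLaw (inGap ∩ (fun p => gap p.2) ⁻¹' r) := by
  rw [prod_inGap_inter_snd (measurable_posGap (hs.prod hr)),
    setLIntegral_posGap_preimage_prod ENNReal.measurable_ofReal hs hr]
  exact congrArg _ (prod_inGap_inter_snd (measurable_gap hr)).symm

lemma prod_box_ne_zero {a b c d e f : ℝ} (ha : 0 ≤ a) (hab : a < b) (hb : b ≤ 1) (hc : 0 ≤ c)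
    (hcd : c < d) (hde : d ≤ e) (hef : e < f) (hf : f ≤ 1) :
    unifLaw.prod uvLaw (Icc a b ×ˢ (Icc c d ×ˢ Icc e f)) ≠ 0 := by
  rw [Measure.prod_prod, unifLaw_Icc ha hb, uvLaw_Icc_prod_Icc hc hde hf]
  simp [hab, hcd, hef]

lemma prod_offGap_ne_zero : unifLaw.prod uvLaw offGap ≠ 0 := by
  refine fun h => prod_box_ne_zero (a := 0) (b := 1 / 4) (c := 1 / 2) (d := 3 / 4) (e := 3 / 4)
    (f := 1) (by norm_num) (by norm_num) (by norm_num) (by norm_num) (by norm_num) le_rfl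
    (by norm_num) le_rfl (measure_mono_null ?_ h)
  rintro p ⟨⟨-, hx⟩, ⟨hu, -⟩, -⟩
  exact Or.inl (by linarith)

lemma prod_inGap_ne_zero : unifLaw.prod uvLaw inGap ≠ 0 := by
  refine fun h => prod_box_ne_zero (a := 1 / 4) (b := 1 / 2) (c := 0) (d := 1 / 4) (e := 3 / 4)
    (f := 1) (by norm_num) (by norm_num) (by norm_num) le_rfl (by norm_num) (by norm_num)
    (by norm_num) le_rfl (measure_mono_null ?_ h)
  rintro p ⟨⟨hx, hx'⟩, ⟨-, hu⟩, hv, -⟩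
  exact ⟨by linarith, by linarith⟩

lemma cond_offGap :
    (unifLaw.prod uvLaw)[|offGap].map W0 = unifLaw ∧
      IndepFun W0 (fun p => gap p.2) ((unifLaw.prod uvLaw)[|offGap]) := by
  have := cond_isProbabilityMeasure prod_offGap_ne_zero
  refine map_eq_and_indepFun_of_measure_inter_preimage_eq_mul measurable_W0 fun s t hs ht => ?_
  rw [cond_apply measurableSet_offGap, cond_apply measurableSet_offGap, ← inter_assoc,
    prod_offGap_inter_W0_inter_gap hs ht, mul_left_comm]

lemma cond_inGap :
    (unifLaw.prod uvLaw)[|inGap].map W0 = unifLaw ∧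
      (unifLaw.prod uvLaw)[|inGap].map W1 = unifLaw ∧
      iIndepFun ![W0, W1, fun p => gap p.2] ((unifLaw.prod uvLaw)[|inGap]) := by
  have := cond_isProbabilityMeasure prod_inGap_ne_zero
  refine map_eq_and_iIndepFun_of_measure_inter_preimage_eq_mul measurable_W0 measurable_W1
    measurable_gap_snd fun s t r hs ht hr => ?_
  -- on `inGap`, `W0 = U / (1 - D)` depends on `(U, V)` only
  have hset : inGap ∩ (W0 ⁻¹' s ∩ W1 ⁻¹' t ∩ (fun p => gap p.2) ⁻¹' r)
      = inGap ∩ W1 ⁻¹' t ∩ Prod.snd ⁻¹' (posGap ⁻¹' (s ×ˢ r)) := by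
    ext p
    simp only [mem_inter_iff, mem_preimage, mem_prod, posGap, inGap, mem_ofPred_eq, W0, W1]
    constructor
    · rintro ⟨hp, ⟨hK0, hK1⟩, hr⟩
      exact ⟨⟨hp, hK1⟩, by rwa [K0_of_mem_Ico hp.1 hp.2] at hK0, hr⟩
    · rintro ⟨⟨hp, hK1⟩, hK0, hr⟩
      exact ⟨hp, ⟨by rwa [K0_of_mem_Ico hp.1 hp.2], hK1⟩, hr⟩
  rw [cond_apply measurableSet_inGap, cond_apply measurableSet_inGap, hset,
    prod_inGap_inter_W1_inter_snd ht (measurable_posGap (hs.prod hr)),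
    prod_inGap_inter_posGap hs hr]
  ring

/-- with `W₀ = K₀(ξ;U,V)`, `W₁ = K₁(ξ;U,V)`, `D = V−U`:
(a) conditionally on `{ξ < U or ξ ≥ V}`, `W₀` is uniform on `[0,1]` and independent of `D`;
(b) conditionally on `{U ≤ ξ < V}`, `W₀`, `W₁`, `D` are mutually independent and `W₀`, `W₁`
are uniform on `[0,1]`. -/
theorem stmt_5 {Ω : Type*} [MeasurableSpace Ω] (μ : Measure Ω) [IsProbabilityMeasure μ]
    (UV : Ω → ℝ × ℝ) (hUVmeas : Measurable UV) (hUVlaw : μ.map UV = uvLaw)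
    (ξ : Ω → ℝ) (hξmeas : Measurable ξ) (hξlaw : μ.map ξ = unifLaw)
    (hindep : IndepFun ξ UV μ) :
    -- (a)
    ((μ[|{ω | ξ ω < (UV ω).1 ∨ (UV ω).2 ≤ ξ ω}]).map
        (fun ω => K0 (ξ ω) (UV ω).1 (UV ω).2) = unifLaw ∧
      IndepFun (fun ω => K0 (ξ ω) (UV ω).1 (UV ω).2)
        (fun ω => (UV ω).2 - (UV ω).1)
        (μ[|{ω | ξ ω < (UV ω).1 ∨ (UV ω).2 ≤ ξ ω}])) ∧
    -- (b)
    ((μ[|{ω | (UV ω).1 ≤ ξ ω ∧ ξ ω < (UV ω).2}]).map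
        (fun ω => K0 (ξ ω) (UV ω).1 (UV ω).2) = unifLaw ∧
      (μ[|{ω | (UV ω).1 ≤ ξ ω ∧ ξ ω < (UV ω).2}]).map
        (fun ω => K1 (ξ ω) (UV ω).1 (UV ω).2) = unifLaw ∧
      iIndepFun
        (![fun ω => K0 (ξ ω) (UV ω).1 (UV ω).2,
           fun ω => K1 (ξ ω) (UV ω).1 (UV ω).2,
           fun ω => (UV ω).2 - (UV ω).1])
        (μ[|{ω | (UV ω).1 ≤ ξ ω ∧ ξ ω < (UV ω).2}])) := by
  set T : Ω → ℝ × ℝ × ℝ := fun ω => (ξ ω, UV ω)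
  have hT : Measurable T := hξmeas.prodMk hUVmeas
  have hcond : ∀ {A}, MeasurableSet A → (unifLaw.prod uvLaw)[|A] = (μ[|T ⁻¹' A]).map T :=
    fun hA => by
      rw [map_cond_preimage hT hA, ← hξlaw, ← hUVlaw,
        (indepFun_iff_map_prod_eq_prod_map_map hξmeas.aemeasurable hUVmeas.aemeasurable).1 hindep]
  obtain ⟨hoff₀, hoff⟩ := cond_offGap
  obtain ⟨hin₀, hin₁, hin⟩ := cond_inGap
  rw [hcond measurableSet_offGap, Measure.map_map measurable_W0 hT] at hoff₀
  rw [hcond measurableSet_offGap] at hoff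
  rw [hcond measurableSet_inGap, Measure.map_map measurable_W0 hT] at hin₀
  rw [hcond measurableSet_inGap, Measure.map_map measurable_W1 hT] at hin₁
  rw [hcond measurableSet_inGap] at hin
  refine ⟨⟨hoff₀, hoff.comp_right hT measurable_W0 measurable_gap_snd⟩,
    hin₀, hin₁, ?_⟩
  convert (hin.comp_right hT fun i => by
    fin_cases i; exacts [measurable_W0, measurable_W1, measurable_gap_snd]) using 1
  · ext i : 1
    fin_cases i <;> rfl
  · rfl

end
end

section
/- Let μ : ℕ → ℝ satisfy μ(n) = 1/3 + (4/(3n))·Σ_{k=1}^{n−1} μ(k) for all n ≥ 1 (with the empty sum equal to 0 for n = 1). Then for every n ≥ 1, μ(n) = Γ(n + 4/3)/(Γ(4/3)·n!) − 1; moreover there exists a constant C such that |μ(n) − ( n^{1/3}/Γ(4/3) − 1 )| ≤ C·n^{−2/3} for all n ≥ 1. -/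
/-!
Differencing the recurrence at `n` and `n + 1` gives `(n + 1) μ(n + 1) = (n + 4/3) μ(n) + 1/3`,
so `μ + 1` satisfies the first-order recurrence `(n + 1) ν(n + 1) = (n + 4/3) ν(n)` of the
normalised rising factorial `Γ(n + 4/3) / (Γ(4/3) n!)`. The asymptotics follow from Gautschi's
inequality `x^s ≤ Γ(x + 1 + s) / Γ(x + 1) ≤ (x + 1)^s`, a consequence of the log-convexity of `Γ`,
together with the concavity bound `(x + 1)^s ≤ x^s + s x^(s - 1)`.
-/

open scoped Nat

namespace Real

variable {x s : ℝ}

theorem rpow_add_le_rpow_add_mul_rpow_sub_one {h : ℝ} (hx : 0 < x) (hh : 0 ≤ h)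
    (hs₀ : 0 ≤ s) (hs₁ : s ≤ 1) : (x + h) ^ s ≤ x ^ s + s * h * x ^ (s - 1) := by
  have hxs : 0 < x ^ s := rpow_pos_of_pos hx s
  have hbernoulli : (1 + h / x) ^ s ≤ 1 + s * (h / x) :=
    rpow_one_add_le_one_add_mul_self (by have := div_nonneg hh hx.le; linarith) hs₀ hs₁
  calc (x + h) ^ s = x ^ s * (1 + h / x) ^ s := by
        rw [← mul_rpow hx.le (by positivity), mul_add, mul_div_cancel₀ _ hx.ne', mul_one]
    _ ≤ x ^ s * (1 + s * (h / x)) := mul_le_mul_of_nonneg_left hbernoulli hxs.le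
    _ = x ^ s + s * h * x ^ (s - 1) := by rw [rpow_sub_one hx.ne']; field_simp

theorem Gamma_add_le_Gamma_mul_rpow (hx : 0 < x) (hs₀ : 0 < s) (hs₁ : s < 1) :
    Gamma (x + s) ≤ Gamma x * x ^ s := by
  have hΓ : 0 < Gamma x := Gamma_pos_of_pos hx
  have hconv := Gamma_mul_add_mul_le_rpow_Gamma_mul_rpow_Gamma hx (by linarith : 0 < x + 1)
    (sub_pos.2 hs₁) hs₀ (sub_add_cancel 1 s)
  calc Gamma (x + s) = Gamma ((1 - s) * x + s * (x + 1)) := by ring_nf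
    _ ≤ Gamma x ^ (1 - s) * Gamma (x + 1) ^ s := hconv
    _ = Gamma x * x ^ s := by
        rw [Gamma_add_one hx.ne', mul_rpow hx.le hΓ.le, mul_left_comm, ← rpow_add hΓ,
          sub_add_cancel, rpow_one, mul_comm]

theorem Gamma_add_one_mul_rpow_le (hx : 0 < x + s) (hs₀ : 0 < s) (hs₁ : s < 1) :
    Gamma (x + 1) * (x + s) ^ s ≤ Gamma (x + 1 + s) := by
  have hgautschi := Gamma_add_le_Gamma_mul_rpow hx (sub_pos.2 hs₁) (by linarith : 1 - s < 1)
  have hpow : 0 < (x + s) ^ s := rpow_pos_of_pos hx s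
  calc Gamma (x + 1) * (x + s) ^ s
      = Gamma (x + s + (1 - s)) * (x + s) ^ s := by ring_nf
    _ ≤ Gamma (x + s) * (x + s) ^ (1 - s) * (x + s) ^ s :=
        mul_le_mul_of_nonneg_right hgautschi hpow.le
    _ = Gamma (x + 1 + s) := by
        rw [mul_assoc, ← rpow_add hx, sub_add_cancel, rpow_one, mul_comm,
          ← Gamma_add_one hx.ne']
        ring_nf

theorem abs_Gamma_add_one_add_div_sub_rpow_le (hx : 0 < x) (hs₀ : 0 < s) (hs₁ : s < 1) :
    |Gamma (x + 1 + s) / Gamma (x + 1) - x ^ s| ≤ s * x ^ (s - 1) := by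
  have hΓ : 0 < Gamma (x + 1) := Gamma_pos_of_pos (by linarith)
  have hlower : x ^ s ≤ Gamma (x + 1 + s) / Gamma (x + 1) := by
    rw [le_div_iff₀ hΓ]
    calc x ^ s * Gamma (x + 1) ≤ (x + s) ^ s * Gamma (x + 1) := by
          gcongr; linarith
      _ ≤ Gamma (x + 1 + s) := by
          rw [mul_comm]; exact Gamma_add_one_mul_rpow_le (by linarith) hs₀ hs₁
  have hupper : Gamma (x + 1 + s) / Gamma (x + 1) ≤ x ^ s + s * x ^ (s - 1) := by
    rw [div_le_iff₀ hΓ]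
    calc Gamma (x + 1 + s) ≤ Gamma (x + 1) * (x + 1) ^ s :=
          Gamma_add_le_Gamma_mul_rpow (by linarith) hs₀ hs₁
      _ ≤ Gamma (x + 1) * (x ^ s + s * 1 * x ^ (s - 1)) := by
          gcongr; exact rpow_add_le_rpow_add_mul_rpow_sub_one hx zero_le_one hs₀.le hs₁.le
      _ = (x ^ s + s * x ^ (s - 1)) * Gamma (x + 1) := by ring
  rw [abs_of_nonneg (sub_nonneg.2 hlower)]
  linarith

end Real

open Real

/-- The rising factorial `s (s + 1) ⋯ (s + n - 1)` divided by `n!`. -/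
noncomputable def gammaRatio (s : ℝ) (n : ℕ) : ℝ := Gamma (n + s) / (Gamma s * n !)

theorem gammaRatio_zero {s : ℝ} (hs : 0 < s) : gammaRatio s 0 = 1 := by
  simp [gammaRatio, (Gamma_pos_of_pos hs).ne']

theorem succ_mul_gammaRatio_succ {s : ℝ} (hs : 0 < s) (n : ℕ) :
    (n + 1) * gammaRatio s (n + 1) = (n + s) * gammaRatio s n := by
  have hns : (n : ℝ) + s ≠ 0 := by positivity
  have hfac : (0 : ℝ) < n ! := by exact_mod_cast n.factorial_pos
  simp only [gammaRatio, Nat.cast_add, Nat.cast_one, add_right_comm (n : ℝ) 1 s,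
    Gamma_add_one hns, Nat.factorial_succ, Nat.cast_mul]
  field_simp

theorem eq_gammaRatio_of_succ_mul {s : ℝ} (hs : 0 < s) {ν : ℕ → ℝ} (hν₁ : ν 1 = s)
    (hν : ∀ n : ℕ, 1 ≤ n → (n + 1) * ν (n + 1) = (n + s) * ν n) :
    ∀ n : ℕ, 1 ≤ n → ν n = gammaRatio s n := by
  intro n hn
  induction n, hn using Nat.le_induction with
  | base => simpa [gammaRatio_zero hs, hν₁] using (succ_mul_gammaRatio_succ hs 0).symm
  | succ n hn ih =>
    have hn1 : (n : ℝ) + 1 ≠ 0 := by positivity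
    apply mul_left_cancel₀ hn1
    rw [hν n hn, ih, succ_mul_gammaRatio_succ hs]

section Recurrence

variable {μ : ℕ → ℝ}
  (hrec : ∀ n : ℕ, 1 ≤ n → μ n = 1/3 + (4 / (3 * (n : ℝ))) * ∑ k ∈ Finset.Ico 1 n, μ k)
include hrec

theorem recurrence_one : μ 1 = 1/3 := by
  simpa using hrec 1 le_rfl

theorem recurrence_succ (n : ℕ) (hn : 1 ≤ n) :
    (n + 1) * μ (n + 1) = (n + 4/3) * μ n + 1/3 := by
  have hn0 : (n : ℝ) ≠ 0 := by positivity
  have hnow := hrec n hn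
  have hnext := hrec (n + 1) (by omega)
  rw [Finset.sum_Ico_succ_top hn] at hnext
  field_simp at hnow hnext
  push_cast at hnext
  linarith

theorem recurrence_eq_gammaRatio (n : ℕ) (hn : 1 ≤ n) : μ n = gammaRatio (4/3) n - 1 := by
  have hν : ∀ n : ℕ, 1 ≤ n → (n + 1) * (μ (n + 1) + 1) = (n + 4/3) * (μ n + 1) := by
    intro n hn
    linarith [recurrence_succ hrec n hn]
  have hshifted := eq_gammaRatio_of_succ_mul (s := 4/3) (ν := fun n => μ n + 1) (by norm_num)
    (by simp only [recurrence_one hrec]; norm_num) (by exact_mod_cast hν) n hn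
  linarith

end Recurrence

/-- solution of the recurrence `μ(n) = 1/3 + (4/(3n))·Σ_{k=1}^{n−1} μ(k)`
for the homogeneous lamination: exact Gamma formula and asymptotic expansion. -/
theorem stmt_10 (μ : ℕ → ℝ)
    (hrec : ∀ n : ℕ, 1 ≤ n →
      μ n = 1/3 + (4 / (3 * (n : ℝ))) * ∑ k ∈ Finset.Ico 1 n, μ k) :
    (∀ n : ℕ, 1 ≤ n →
        μ n = Real.Gamma ((n : ℝ) + 4/3) / (Real.Gamma (4/3) * (n ! : ℝ)) - 1) ∧
    ∃ C : ℝ, ∀ n : ℕ, 1 ≤ n →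
        |μ n - ((n : ℝ) ^ ((1:ℝ)/3) / Real.Gamma (4/3) - 1)|
          ≤ C * (n : ℝ) ^ (-(2:ℝ)/3) := by
  refine ⟨recurrence_eq_gammaRatio hrec, 1 / (3 * Gamma (4/3)), fun n hn => ?_⟩
  have hΓ : 0 < Gamma (4/3) := Gamma_pos_of_pos (by norm_num)
  have hgautschi := abs_Gamma_add_one_add_div_sub_rpow_le (x := n) (s := 1/3)
    (by positivity) (by norm_num) (by norm_num)
  rw [Gamma_nat_eq_factorial, show (n : ℝ) + 1 + 1/3 = n + 4/3 by ring,
    show (1 : ℝ)/3 - 1 = -(2 : ℝ)/3 by norm_num] at hgautschi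
  have hdiff : μ n - ((n : ℝ) ^ ((1:ℝ)/3) / Gamma (4/3) - 1)
      = (Gamma (n + 4/3) / (n ! : ℝ) - (n : ℝ) ^ ((1:ℝ)/3)) / Gamma (4/3) := by
    rw [recurrence_eq_gammaRatio hrec n hn, gammaRatio]
    field_simp
    ring
  rw [hdiff, abs_div, abs_of_pos hΓ, div_le_iff₀ hΓ]
  calc _ ≤ 1/3 * (n : ℝ) ^ (-(2:ℝ)/3) := hgautschi
    _ = 1 / (3 * Gamma (4/3)) * (n : ℝ) ^ (-(2:ℝ)/3) * Gamma (4/3) := by field_simp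
end

section
/- Let 0 < κ < b, γ ∈ (0,1), C ≥ 0 and n₀ ∈ ℕ, and let d : ℕ → [0,∞) satisfy, for all n ≥ n₀, d(n) ≤ (1−γ)·n^{−κ}·max{ d(i)·(max(i,1))^{κ} : 0 ≤ i < n } + C·n^{−b}. Then there exists a constant K such that d(n) ≤ K·n^{−κ} for all n ≥ 1. -/
/-!
Put `e i = d i · max(i,1)^κ`. Multiplying the recursion by `n^κ` and using `n^{κ-b} ≤ 1` gives
`e n ≤ (1 - γ) · max_{i<n} e i + C` for `n > n₀`. A contraction of this kind keeps `e` below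
`K = max (C / γ) (max_{i ≤ n₀} e i)` by strong induction, since `(1 - γ) K + C ≤ K`;
dividing back by `n^κ` gives `d n ≤ K n^{-κ}`.
-/

open Finset

theorem forall_le_of_le_mul_sup'_add {e : ℕ → ℝ} {a c K : ℝ} {n₀ : ℕ} (ha : 0 ≤ a)
    (hK : a * K + c ≤ K) (hinit : ∀ n ≤ n₀, e n ≤ K)
    (hrec : ∀ n (hn : 0 < n), n₀ < n →
      e n ≤ a * (range n).sup' (nonempty_range_iff.mpr hn.ne') e + c) :
    ∀ n, e n ≤ K := by
  intro n
  induction n using Nat.strong_induction_on with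
  | _ n ih =>
    rcases le_or_gt n n₀ with hn | hn
    · exact hinit n hn
    · have hn' : 0 < n := by omega
      have hsup : (range n).sup' (nonempty_range_iff.mpr hn'.ne') e ≤ K :=
        sup'_le _ _ fun i hi => ih i (mem_range.mp hi)
      calc e n ≤ a * (range n).sup' _ e + c := hrec n hn' hn
        _ ≤ a * K + c := by gcongr
        _ ≤ K := hK

theorem exists_forall_le_of_le_mul_sup'_add {e : ℕ → ℝ} {a c : ℝ} (ha₀ : 0 ≤ a) (ha₁ : a < 1)
    (n₀ : ℕ) (hrec : ∀ n (hn : 0 < n), n₀ < n →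
      e n ≤ a * (range n).sup' (nonempty_range_iff.mpr hn.ne') e + c) :
    ∃ K, ∀ n, e n ≤ K := by
  set K := max (c / (1 - a)) ((range (n₀ + 1)).sup' nonempty_range_add_one e)
  have hc : c ≤ (1 - a) * K := by
    rw [← div_le_iff₀' (by linarith)]
    exact le_max_left _ _
  refine ⟨K, forall_le_of_le_mul_sup'_add ha₀ (by linarith) (fun n hn => ?_) hrec⟩
  exact (le_sup' e (mem_range.mpr (Nat.lt_succ_of_le hn))).trans (le_max_right _ _)

theorem mul_rpow_le_add_of_le_rpow_neg_add {x y a M C κ b : ℝ} (hx : 1 ≤ x) (hκb : κ ≤ b)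
    (hC : 0 ≤ C) (h : y ≤ a * x ^ (-κ) * M + C * x ^ (-b)) : y * x ^ κ ≤ a * M + C := by
  have hx₀ : 0 < x := by linarith
  have hκ : x ^ (-κ) * x ^ κ = 1 := by rw [← Real.rpow_add hx₀, neg_add_cancel, Real.rpow_zero]
  have hb : x ^ (-b) * x ^ κ ≤ 1 := by
    rw [← Real.rpow_add hx₀]
    exact Real.rpow_le_one_of_one_le_of_nonpos hx (by linarith)
  calc y * x ^ κ ≤ (a * x ^ (-κ) * M + C * x ^ (-b)) * x ^ κ := by gcongr
    _ = a * M * (x ^ (-κ) * x ^ κ) + C * (x ^ (-b) * x ^ κ) := by ring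
    _ ≤ a * M + C := by rw [hκ, mul_one]; gcongr; exact mul_le_of_le_one_right hC hb

theorem le_mul_rpow_neg_of_mul_rpow_le {x y K κ : ℝ} (hx : 0 < x) (h : y * x ^ κ ≤ K) :
    y ≤ K * x ^ (-κ) := by
  rwa [Real.rpow_neg hx.le, ← div_eq_mul_inv, le_div_iff₀ (Real.rpow_pos_of_pos hx κ)]

theorem stmt_18_general (κ b γ C : ℝ) (hκb : κ < b) (hγ0 : 0 < γ) (hγ1 : γ < 1)
    (hC : 0 ≤ C) (n₀ : ℕ) (d : ℕ → ℝ)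
    (hrec : ∀ n : ℕ, n₀ ≤ n → ∀ hn : 0 < n,
      d n ≤ (1 - γ) * (n : ℝ) ^ (-κ)
              * (Finset.range n).sup' (Finset.nonempty_range_iff.mpr hn.ne')
                  (fun i => d i * (max (i : ℝ) 1) ^ κ)
            + C * (n : ℝ) ^ (-b)) :
    ∃ K : ℝ, ∀ n : ℕ, 1 ≤ n → d n ≤ K * (n : ℝ) ^ (-κ) := by
  have hmax {n : ℕ} (hn : 1 ≤ n) : max (n : ℝ) 1 = n := max_eq_left (by exact_mod_cast hn)
  obtain ⟨K, hK⟩ := exists_forall_le_of_le_mul_sup'_add (e := fun i => d i * (max (i : ℝ) 1) ^ κ)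
    (a := 1 - γ) (c := C) (by linarith) (by linarith) n₀ fun n hn hn₀ => by
      rw [hmax hn]
      exact mul_rpow_le_add_of_le_rpow_neg_add (by exact_mod_cast hn) hκb.le hC
        (hrec n hn₀.le hn)
  refine ⟨K, fun n hn => le_mul_rpow_neg_of_mul_rpow_le (by exact_mod_cast hn) ?_⟩
  simpa only [hmax hn] using hK n

/-- the real-sequence induction behind the rate-of-convergence estimates:
if `d(n) ≤ (1−γ)·n^{−κ}·max{d(i)·(max(i,1))^κ : i < n} + C·n^{−b}` for `n ≥ n₀`
(with `0 < κ < b`, `γ ∈ (0,1)`, `C ≥ 0`), then `d(n) = O(n^{−κ})`. -/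
theorem stmt_18 (κ b γ C : ℝ) (hκ : 0 < κ) (hκb : κ < b) (hγ0 : 0 < γ) (hγ1 : γ < 1)
    (hC : 0 ≤ C) (n₀ : ℕ) (d : ℕ → ℝ) (hd : ∀ n, 0 ≤ d n)
    (hrec : ∀ n : ℕ, n₀ ≤ n → ∀ hn : 0 < n,
      d n ≤ (1 - γ) * (n : ℝ) ^ (-κ)
              * (Finset.range n).sup' (Finset.nonempty_range_iff.mpr hn.ne')
                  (fun i => d i * (max (i : ℝ) 1) ^ κ)
            + C * (n : ℝ) ^ (-b)) :
    ∃ K : ℝ, ∀ n : ℕ, 1 ≤ n → d n ≤ K * (n : ℝ) ^ (-κ) :=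
  stmt_18_general κ b γ C hκb hγ0 hγ1 hC n₀ d hrec
end
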